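/- Let A be an arbitrary acceptance set in an ordered topological vector space X and S a traded asset. If S_T belongs to the core (algebraic interior) of X_+, then ρ_{A,S} is finitely valued on all of X. -/

import Mathlib

open Filter Topology

variable {X : Type*} [AddCommGroup X] [Module ℝ X] [PartialOrder X]
  [CovariantClass X X (· + ·) (· ≤ ·)] [PosSMulMono ℝ X]
  [TopologicalSpace X] [IsTopologicalAddGroup X] [ContinuousSMul ℝ X]

/-- The risk measure `ρ_{A,S}(x) = inf {m : x + (m/S₀)·S_T ∈ A}`, valued in `EReal`
(with `inf ∅ = ⊤` and unbounded-below giving `⊥`). -/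
noncomputable def rho (A : Set X) (S0 : ℝ) (ST : X) (x : X) : EReal :=
  sInf ((fun r : ℝ => (r : EReal)) '' {r : ℝ | x + (r / S0) • ST ∈ A})

/-- A set is monotone if it contains, with any element, every larger element. -/
def MonotoneSet (A : Set X) : Prop := ∀ x ∈ A, ∀ y, x ≤ y → y ∈ A

/-- An acceptance set: nonempty, proper, and monotone. -/
def AcceptanceSet (A : Set X) : Prop := A.Nonempty ∧ A ≠ Set.univ ∧ MonotoneSet A

/-- The algebraic core (algebraic interior) of a set. -/
def algCore (A : Set X) : Set X :=
  {x | ∀ y : X, ∃ ε > 0, ∀ l : ℝ, |l| < ε → x + l • y ∈ A}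

/-! Because `S_T` lies in the core of the positive cone, it is an order unit: every `y` satisfies
`y ≤ t • S_T` for some real `t`. Comparing `x` with an acceptable `a` gives `a ≤ x + t • S_T`, so some
finite capital makes `x` acceptable and `ρ(x) < ⊤`; comparing `x` with an unacceptable `b` gives
`x + c • S_T ≤ b` for all `c ≤ -t`, so such capital never makes `x` acceptable and `ρ(x) > ⊥`. -/

section

variable {E : Type*} [AddCommGroup E] [Module ℝ E]

theorem algCore_subset (C : Set E) : algCore C ⊆ C := fun x hx ↦ by
  obtain ⟨ε, hε, h⟩ := hx 0
  simpa using h 0 (by simpa using hε)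

theorem exists_le_smul_of_mem_algCore_nonneg [PartialOrder E] [AddLeftMono E] [PosSMulMono ℝ E]
    {s : E} (hs : s ∈ algCore {x : E | 0 ≤ x}) (y : E) : ∃ t : ℝ, y ≤ t • s := by
  obtain ⟨ε, hε, h⟩ := hs (-y)
  have hl : 0 < ε / 2 := half_pos hε
  have hsy : (ε / 2) • y ≤ s := by
    simpa [sub_nonneg] using h (ε / 2) (by rw [abs_of_pos hl]; linarith)
  refine ⟨(ε / 2)⁻¹, ?_⟩
  calc y = (ε / 2)⁻¹ • (ε / 2) • y := (inv_smul_smul₀ hl.ne' y).symm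
    _ ≤ (ε / 2)⁻¹ • s := smul_le_smul_of_nonneg_left hsy (inv_nonneg.mpr hl.le)

theorem rho_le_of_add_smul_mem {A : Set E} {S0 : ℝ} (hS0 : S0 ≠ 0) {ST x : E} {c : ℝ}
    (h : x + c • ST ∈ A) : rho A S0 ST x ≤ ((S0 * c : ℝ) : EReal) :=
  sInf_le ⟨S0 * c, show x + (S0 * c / S0) • ST ∈ A by rwa [mul_div_cancel_left₀ c hS0], rfl⟩

theorem le_rho_of_forall_add_smul_mem {A : Set E} {S0 : ℝ} (hS0 : 0 < S0) {ST x : E} {d : ℝ}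
    (h : ∀ c : ℝ, x + c • ST ∈ A → d < c) : ((S0 * d : ℝ) : EReal) ≤ rho A S0 ST x := by
  refine le_sInf ?_
  rintro _ ⟨r, hr, rfl⟩
  exact EReal.coe_le_coe_iff.mpr ((lt_div_iff₀' hS0).mp (h _ hr)).le

variable [PartialOrder E] [AddLeftMono E] {A : Set E} {s x : E} {t : ℝ}

theorem MonotoneSet.add_smul_mem (hA : MonotoneSet A) {a : E} (ha : a ∈ A) (h : a - x ≤ t • s) :
    x + t • s ∈ A :=
  hA a ha _ (by rwa [← sub_le_iff_le_add'])

theorem MonotoneSet.neg_lt_of_add_smul_mem [PosSMulMono ℝ E] (hA : MonotoneSet A) {b : E}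
    (hb : b ∉ A) (hs : 0 ≤ s) (h : x - b ≤ t • s) {c : ℝ} (hc : x + c • s ∈ A) : -t < c := by
  by_contra! hct
  have hcs : c • s ≤ (-t) • s :=
    sub_nonneg.mp (by rw [← sub_smul]; exact smul_nonneg (sub_nonneg.mpr hct) hs)
  refine hb (hA _ hc b ?_)
  calc x + c • s ≤ x + (-t) • s := add_le_add_right hcs x
    _ ≤ b := by rw [neg_smul, ← sub_eq_add_neg, sub_le_comm]; exact h

end

theorem rho_finite_of_core (A : Set X) (S0 : ℝ) (ST : X)
    (hA : AcceptanceSet A) (hS0 : 0 < S0)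
    (hcore : ST ∈ algCore {x : X | 0 ≤ x}) :
    ∀ x : X, rho A S0 ST x ≠ ⊤ ∧ rho A S0 ST x ≠ ⊥ := by
  obtain ⟨⟨a, ha⟩, hproper, hmono⟩ := hA
  obtain ⟨b, hb⟩ := Set.ne_univ_iff_exists_notMem A |>.mp hproper
  have hST : 0 ≤ ST := algCore_subset _ hcore
  intro x
  obtain ⟨t, ht⟩ := exists_le_smul_of_mem_algCore_nonneg hcore (a - x)
  obtain ⟨u, hu⟩ := exists_le_smul_of_mem_algCore_nonneg hcore (x - b)
  have hle := rho_le_of_add_smul_mem hS0.ne' (hmono.add_smul_mem ha ht)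
  have hge := le_rho_of_forall_add_smul_mem hS0 fun c ↦ hmono.neg_lt_of_add_smul_mem hb hST hu
  exact ⟨ne_top_of_le_ne_top (EReal.coe_ne_top _) hle, ne_bot_of_le_ne_bot (EReal.coe_ne_bot _) hge⟩
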